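/- Let S be a scheme and let P, Q, G be three commutative S-group schemes with P and Q divisible. Then for all nonzero integers n and m, the endomorphism of Biext^1(P, Q; G) sending the class of a biextension B to the class of its pull-back (n × m)^*B along the map n × m : P × Q → P × Q has trivial kernel. -/

import Mathlib

/-!
Shared prelude: fppf and étale topologies on the category of `S`-schemes, commutative
group schemes as representable abelian presheaves, (commutative) extensions of abelian
fppf sheaves, biextensions, algebraic spaces, and related notions, following
C. Bertolin, "Extensions and biextensions of locally constant group schemes, tori and
abelian schemes".
-/

open CategoryTheory AlgebraicGeometry Opposite Limits

universe u

namespace FormalPaper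


/-- A morphism of schemes is flat if all its stalk maps are flat ring homomorphisms. -/
def FlatHom {X Y : Scheme.{u}} (f : X ⟶ Y) : Prop := ∀ x : X, RingHom.Flat (f.stalkMap x).hom

/-- A morphism of schemes is unramified if it is locally of finite presentation and its
diagonal is an open immersion. -/
def UnramifiedHom {X Y : Scheme.{u}} (f : X ⟶ Y) : Prop :=
  LocallyOfFinitePresentation f ∧ IsOpenImmersion (pullback.diagonal f)

/-- A family of maps is an fppf cover if each member is flat and locally of finite
presentation and the family is jointly surjective. -/
def IsFppfCover {S : Scheme.{u}} {X : Over S} (R : Presieve X) : Prop :=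
  (∀ ⦃Y : Over S⦄ (f : Y ⟶ X), R f → FlatHom f.left ∧ LocallyOfFinitePresentation f.left) ∧
  (∀ x : X.left, ∃ (Y : Over S) (f : Y ⟶ X) (_ : R f) (y : Y.left), f.left.base y = x)

/-- An étale cover: each member étale, jointly surjective. -/
def IsEtaleCover {S : Scheme.{u}} {X : Over S} (R : Presieve X) : Prop :=
  (∀ ⦃Y : Over S⦄ (f : Y ⟶ X), R f → IsEtale f.left) ∧
  (∀ x : X.left, ∃ (Y : Over S) (f : Y ⟶ X) (_ : R f) (y : Y.left), f.left.base y = x)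

/-- The fppf topology on the category of `S`-schemes: the coarsest Grothendieck topology
for which every fppf covering family generates a covering sieve. -/
def fppfTopology (S : Scheme.{u}) : GrothendieckTopology (Over S) :=
  sInf { J | ∀ (X : Over S) (R : Presieve X), IsFppfCover R → Sieve.generate R ∈ J X }

/-- The (big) étale topology on the category of `S`-schemes. -/
def etaleTopology (S : Scheme.{u}) : GrothendieckTopology (Over S) :=
  sInf { J | ∀ (X : Over S) (R : Presieve X), IsEtaleCover R → Sieve.generate R ∈ J X }

/-- A commutative `S`-group scheme, seen as a representable abelian presheaf on the
category of `S`-schemes (its functor of points, together with a representing object). -/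
structure CommGroupScheme (S : Scheme.{u}) where
  /-- The functor of points, valued in abelian groups. -/
  P : (Over S)ᵒᵖ ⥤ AddCommGrpCat.{u}
  /-- The representing `S`-scheme. -/
  X : Over S
  /-- Representability of the underlying presheaf of sets. -/
  repr : P ⋙ forget AddCommGrpCat ≅ yoneda.obj X

/-- The fibre of `f` over a point `s` of the base. -/
noncomputable def fiberOver {X S : Scheme.{u}} (f : X ⟶ S) (s : S) : Scheme.{u} :=
  pullback f (S.fromSpecResidueField s)

/-- A morphism of schemes has connected fibres. -/
def HasConnectedFibres {X S : Scheme.{u}} (f : X ⟶ S) : Prop :=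
  ∀ s : S, ConnectedSpace (fiberOver f s)

/-- An abelian `S`-scheme: a commutative group scheme which is smooth and proper over `S`
with connected fibres. -/
def IsAbelianScheme {S : Scheme.{u}} (A : CommGroupScheme S) : Prop :=
  IsSmooth A.X.hom ∧ IsProper A.X.hom ∧ HasConnectedFibres A.X.hom

/-- Restriction ("base change") of a presheaf on `S`-schemes to a presheaf on `B`-schemes
along `g : B ⟶ S`. -/
abbrev resP {S : Scheme.{u}} (P : (Over S)ᵒᵖ ⥤ AddCommGrpCat.{u}) {B : Scheme.{u}} (g : B ⟶ S) :
    (Over B)ᵒᵖ ⥤ AddCommGrpCat.{u} :=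
  (Over.map g).op ⋙ P

/-- The presheaf of locally constant `M`-valued functions, i.e. the functor of points of
the constant `B`-group scheme defined by the abelian group `M`. -/
def LCPresheaf (B : Scheme.{u}) (M : Type u) [AddCommGroup M] : (Over B)ᵒᵖ ⥤ AddCommGrpCat.{u} where
  obj T := AddCommGrpCat.of (LocallyConstant T.unop.left M)
  map {T T'} f := AddCommGrpCat.ofHom
    { toFun := LocallyConstant.comap (f.unop.left.base.hom)
      map_zero' := by ext; simp [LocallyConstant.coe_comap]
      map_add' := by intros; ext; simp [LocallyConstant.coe_comap] }
  map_id T := by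
    ext x a; first | rfl | simp [LocallyConstant.coe_comap] | (simp [LocallyConstant.coe_comap]; rfl)
  map_comp f g := by
    ext x a; first | rfl | simp [LocallyConstant.coe_comap] | (simp [LocallyConstant.coe_comap]; rfl)

/-- `X` is, locally for the étale topology on `S`, the constant group scheme defined by a
finitely generated free `ℤ`-module. -/
def IsLatticeGroupScheme {S : Scheme.{u}} (X : CommGroupScheme S) : Prop :=
  ∃ (ι : Type u) (Si : ι → Scheme.{u}) (f : ∀ i, Si i ⟶ S),
    (∀ i, IsEtale (f i)) ∧
    (∀ s : S, ∃ (i : ι) (y : Si i), (f i).base y = s) ∧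
    (∀ i, ∃ r : ℕ, Nonempty (resP X.P (f i) ≅ LCPresheaf (Si i) (Fin r → ULift.{u} ℤ)))

/-- `X` has constant geometric fibres defined by finitely generated free `ℤ`-modules. -/
def HasLatticeGeometricFibres {S : Scheme.{u}} (X : CommGroupScheme S) : Prop :=
  ∀ (K : Type u) [Field K] [IsAlgClosed K] (g : Spec (.of K) ⟶ S),
    ∃ r : ℕ, Nonempty (resP X.P g ≅ LCPresheaf (Spec (.of K)) (Fin r → ULift.{u} ℤ))

/-- The functor sending a commutative ring `R` to `(Rˣ)^r`, written additively. -/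
def unitsAdd (r : ℕ) : CommRingCat.{u} ⥤ AddCommGrpCat.{u} where
  obj R := AddCommGrpCat.of (Fin r → Additive Rˣ)
  map {R R'} f := AddCommGrpCat.ofHom (AddMonoidHom.compLeft (AddMonoidHom.mk'
      (fun x => Additive.ofMul (Units.map (f.hom : R →* R') x.toMul))
      (by intro a b; simp)) (Fin r))
  map_id R := by ext; first | rfl | simp
  map_comp f g := by ext; first | rfl | simp

/-- The functor of points of the split torus `𝔾ₘ^r` over `B`. -/
def GmPow (B : Scheme.{u}) (r : ℕ) : (Over B)ᵒᵖ ⥤ AddCommGrpCat.{u} :=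
  (Over.forget B).op ⋙ Scheme.Γ ⋙ unitsAdd r

/-- An `S`-torus: a commutative `S`-group scheme which is, locally for the étale topology
on `S`, isomorphic to a split torus `𝔾ₘ^r`. -/
def IsTorus {S : Scheme.{u}} (T : CommGroupScheme S) : Prop :=
  ∃ (ι : Type u) (Si : ι → Scheme.{u}) (f : ∀ i, Si i ⟶ S),
    (∀ i, IsEtale (f i)) ∧
    (∀ s : S, ∃ (i : ι) (y : Si i), (f i).base y = s) ∧
    (∀ i, ∃ r : ℕ, Nonempty (resP T.P (f i) ≅ GmPow (Si i) r))

/-- A (commutative) extension `0 → G → E → Q → 0` of abelian presheaves for the fppf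
topology over `B`: `i` is injective with image the kernel of `p`, and `p` is locally
surjective for the fppf topology (expressed via explicit fppf covering families). -/
structure Extension (B : Scheme.{u}) (Q G : (Over B)ᵒᵖ ⥤ AddCommGrpCat.{u}) where
  /-- The middle term. -/
  E : (Over B)ᵒᵖ ⥤ AddCommGrpCat.{u}
  /-- The inclusion of the kernel. -/
  i : G ⟶ E
  /-- The projection onto the quotient. -/
  p : E ⟶ Q
  comp_eq_zero : i ≫ p = 0
  inj : ∀ T, Function.Injective (i.app T)
  ker_sub : ∀ (T : (Over B)ᵒᵖ) (x : E.obj T), p.app T x = 0 → ∃ g, i.app T g = x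
  locSurj : ∀ (U : Over B) (q : Q.obj (op U)), ∃ R : Presieve U, IsFppfCover R ∧
    ∀ ⦃Z : Over B⦄ (f : Z ⟶ U), R f → ∃ x : E.obj (op Z), p.app (op Z) x = Q.map f.op q

namespace Extension

variable {B : Scheme.{u}} {Q G : (Over B)ᵒᵖ ⥤ AddCommGrpCat.{u}}

/-- An extension is trivial (split) if the projection admits a group-theoretic section. -/
def Splits (e : Extension B Q G) : Prop :=
  ∃ s : Q ⟶ e.E, s ≫ e.p = 𝟙 Q

/-- The restriction of the extension `e` to the base-changed situation over `g : Z ⟶ B`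
splits. -/
def SplitsOver (e : Extension B Q G) {Z : Scheme.{u}} (g : Z ⟶ B) : Prop :=
  ∃ s : resP Q g ⟶ resP e.E g, s ≫ CategoryTheory.Functor.whiskerLeft (Over.map g).op e.p = 𝟙 (resP Q g)

/-- The push-out `n_* e` of the extension `e` along multiplication by `n` on `G`,
restricted over `g : Z ⟶ B`, is trivial; equivalently, multiplication by `n` on `G`
extends to a homomorphism `E → G` over `Z`. -/
def MultSplitsOver (e : Extension B Q G) {Z : Scheme.{u}} (g : Z ⟶ B) (n : ℕ) : Prop :=
  ∃ f : resP e.E g ⟶ resP G g,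
    CategoryTheory.Functor.whiskerLeft (Over.map g).op e.i ≫ f = n • 𝟙 (resP G g)

/-- The extension `e` is (globally) of order `n`: the push-out `n_* e` of `e` along
multiplication by `n` on `G` is a trivial extension; equivalently, multiplication by `n`
on `G` extends to a homomorphism `E → G`. -/
def IsOfOrder (e : Extension B Q G) (n : ℕ) : Prop :=
  ∃ f : e.E ⟶ G, e.i ≫ f = n • 𝟙 G

/-- The extension `e` is of finite order locally over `B` for the Zariski topology. -/
def ZariskiLocallyOfFiniteOrder (e : Extension B Q G) : Prop :=
  ∀ s : B, ∃ U : B.Opens, s ∈ U ∧ ∃ n : ℕ, 0 < n ∧ e.MultSplitsOver U.ι n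

/-- The extension `e` splits locally for the fppf topology on `B`. -/
def LocallySplit (e : Extension B Q G) : Prop :=
  ∃ R : Presieve (Over.mk (𝟙 B)), IsFppfCover R ∧
    ∀ ⦃Z : Over B⦄ (f : Z ⟶ Over.mk (𝟙 B)), R f → e.SplitsOver Z.hom

/-- The middle term of the extension is representable by a scheme. -/
def RepresentableByScheme (e : Extension B Q G) : Prop :=
  ∃ W : Over B, Nonempty (e.E ⋙ forget AddCommGrpCat ≅ yoneda.obj W)

/-- There is a homomorphism of extensions `e ⟶ e'` (over the identity of `Q` and `G`)
after restriction along `g : Z ⟶ B`. -/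
def HomOver (e e' : Extension B Q G) {Z : Scheme.{u}} (g : Z ⟶ B) : Prop :=
  ∃ φ : resP e.E g ⟶ resP e'.E g,
    CategoryTheory.Functor.whiskerLeft (Over.map g).op e.i ≫ φ =
      CategoryTheory.Functor.whiskerLeft (Over.map g).op e'.i ∧
    φ ≫ CategoryTheory.Functor.whiskerLeft (Over.map g).op e'.p =
      CategoryTheory.Functor.whiskerLeft (Over.map g).op e.p

/-- Two extensions become isomorphic locally for the fppf topology on `B`. -/
def LocallyIsomorphic (e e' : Extension B Q G) : Prop :=
  ∃ R : Presieve (Over.mk (𝟙 B)), IsFppfCover R ∧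
    ∀ ⦃Z : Over B⦄ (f : Z ⟶ Over.mk (𝟙 B)), R f → e.HomOver e' Z.hom

end Extension

/-- A presheaf of abelian groups on `S`-schemes is divisible if multiplication by every
nonzero integer is an epimorphism of fppf sheaves, i.e. is locally surjective for the
fppf topology. -/
def IsDivisible {B : Scheme.{u}} (P : (Over B)ᵒᵖ ⥤ AddCommGrpCat.{u}) : Prop :=
  ∀ (n : ℤ), n ≠ 0 → ∀ (U : Over B) (x : P.obj (op U)), ∃ R : Presieve U, IsFppfCover R ∧
    ∀ ⦃Z : Over B⦄ (f : Z ⟶ U), R f → ∃ y : P.obj (op Z), n • y = P.map f.op x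

/-- A functor on `S`-schemes is an algebraic space over `S`: it is a sheaf for the étale
topology, it admits a representable étale surjective cover by a scheme, and it is
quasi-separated over `S` (the diagonal is representable by quasi-compact morphisms). -/
structure IsAlgebraicSpace (S : Scheme.{u}) (F : (Over S)ᵒᵖ ⥤ Type u) : Prop where
  isSheaf : Presheaf.IsSheaf (etaleTopology S) F
  exists_cover : ∃ (U : Over S) (π : yoneda.obj U ⟶ F),
    ∀ (T : Over S) (x : yoneda.obj T ⟶ F), ∃ (W : Over S) (a : W ⟶ U) (b : W ⟶ T),
      IsEtale b.left ∧ Surjective b.left ∧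
      IsPullback (yoneda.map a) (yoneda.map b) π x
  quasiSeparated : ∀ (T : Over S) (x y : yoneda.obj T ⟶ F),
    ∃ (W : Over S) (b : W ⟶ T) (h : yoneda.map b ≫ x = yoneda.map b ≫ y),
      QuasiCompact b.left ∧ Nonempty (IsLimit (Fork.ofι (yoneda.map b) h))

/-- Comparison isomorphism between the two ways of viewing a `T'`-scheme as an `S`-scheme. -/
def cmpIso {S : Scheme.{u}} {T T' : Over S} (f : T' ⟶ T) (U : Over T'.left) :
    (Over.map T'.hom).obj U ≅ (Over.map T.hom).obj ((Over.map f.left).obj U) :=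
  Over.isoMk (Iso.refl _) (by simp)

/-- `e'` is the restriction (base change) of the extension `e` along `f : T' ⟶ T`. -/
def ExtRestriction {S : Scheme.{u}} {Q G : (Over S)ᵒᵖ ⥤ AddCommGrpCat.{u}} {T T' : Over S}
    (f : T' ⟶ T)
    (e : Extension T.left (resP Q T.hom) (resP G T.hom))
    (e' : Extension T'.left (resP Q T'.hom) (resP G T'.hom)) : Prop :=
  ∃ θ : ∀ U : (Over T'.left)ᵒᵖ, e'.E.obj U → e.E.obj ((Over.map f.left).op.obj U),
    (∀ U, Function.Bijective (θ U)) ∧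
    (∀ (U : (Over T'.left)ᵒᵖ) (x y : e'.E.obj U), θ U (x + y) = θ U x + θ U y) ∧
    (∀ {U V : (Over T'.left)ᵒᵖ} (g : U ⟶ V) (x : e'.E.obj U),
      θ V (e'.E.map g x) = e.E.map ((Over.map f.left).op.map g) (θ U x)) ∧
    (∀ (U : (Over T'.left)ᵒᵖ) (gg : (resP G T'.hom).obj U),
      θ U (e'.i.app U gg) = e.i.app _ (G.map ((cmpIso f U.unop).inv.op) gg)) ∧
    (∀ (U : (Over T'.left)ᵒᵖ) (x : e'.E.obj U),
      e.p.app _ (θ U x) = Q.map ((cmpIso f U.unop).inv.op) (e'.p.app U x))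

/-- `F` is the fppf sheaf `uExt¹(Q, G)` associated to the presheaf of isomorphism classes
of extensions of `Q` by `G`: there is a classifying map `cl`, compatible with restriction,
which is locally injective and locally surjective, and `F` is a sheaf. -/
structure IsExtensionSheafification (S : Scheme.{u}) (Q G : (Over S)ᵒᵖ ⥤ AddCommGrpCat.{u})
    (F : (Over S)ᵒᵖ ⥤ AddCommGrpCat.{u}) where
  isSheaf : Presheaf.IsSheaf (fppfTopology S) F
  cl : ∀ T : Over S, Extension T.left (resP Q T.hom) (resP G T.hom) → F.obj (op T)
  cl_zero_of_splits : ∀ T e, Extension.Splits e → cl T e = 0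
  locallySplit_of_cl_zero : ∀ T e, cl T e = 0 → Extension.LocallySplit e
  compat : ∀ (T T' : Over S) (f : T' ⟶ T) e e', ExtRestriction f e e' →
    cl T' e' = F.map f.op (cl T e)
  locInj : ∀ (T : Over S) e e', cl T e = cl T e' → Extension.LocallyIsomorphic e e'
  locSurj : ∀ (T : Over S) (x : F.obj (op T)), ∃ R : Presieve T, IsFppfCover R ∧
    ∀ ⦃Z : Over S⦄ (f : Z ⟶ T), R f →
      ∃ e : Extension Z.left (resP Q Z.hom) (resP G Z.hom), cl Z e = F.map f.op x

/-- Comparison isomorphism used to restrict homomorphisms of restricted presheaves. -/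
def cmpIso' {S B' B'' : Scheme.{u}} (h : B'' ⟶ B') (g : B' ⟶ S) (U : Over B'') :
    (Over.map (h ≫ g)).obj U ≅ (Over.map g).obj ((Over.map h).obj U) :=
  Over.isoMk (Iso.refl _) (by simp)

/-- `f'` is the restriction of the homomorphism `f` along `h : B'' ⟶ B'`. -/
def HomRestriction {S : Scheme.{u}} {A Bp : (Over S)ᵒᵖ ⥤ AddCommGrpCat.{u}}
    {B' B'' : Scheme.{u}} (h : B'' ⟶ B') (g : B' ⟶ S)
    (f : resP A g ⟶ resP Bp g) (f' : resP A (h ≫ g) ⟶ resP Bp (h ≫ g)) : Prop :=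
  ∀ (U : (Over B'')ᵒᵖ) (a : A.obj ((Over.map (h ≫ g)).op.obj U)),
    Bp.map ((cmpIso' h g U.unop).inv.op) (f'.app U a) =
      f.app ((Over.map h).op.obj U) (A.map ((cmpIso' h g U.unop).inv.op) a)
/-- A biextension of `(P, Q)` by `G` in the topos of fppf sheaves over `S` (SGA7 VII 2.1):
a `G`-torsor `B` over `P × Q` together with two compatible partial composition laws making
it an extension of `Q_P` by `G_P` and of `P_Q` by `G_Q`. -/
structure Biextension (S : Scheme.{u}) (P Q G : (Over S)ᵒᵖ ⥤ AddCommGrpCat.{u}) where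
  B : (Over S)ᵒᵖ ⥤ Type u
  isSheaf : Presheaf.IsSheaf (fppfTopology S) B
  p : ∀ T : (Over S)ᵒᵖ, B.obj T → P.obj T
  p_natural : ∀ {T T'} (f : T ⟶ T') (b : B.obj T), p T' (B.map f b) = P.map f (p T b)
  q : ∀ T : (Over S)ᵒᵖ, B.obj T → Q.obj T
  q_natural : ∀ {T T'} (f : T ⟶ T') (b : B.obj T), q T' (B.map f b) = Q.map f (q T b)
  act : ∀ T : (Over S)ᵒᵖ, G.obj T → B.obj T → B.obj T
  act_p : ∀ T g b, p T (act T g b) = p T b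
  act_q : ∀ T g b, q T (act T g b) = q T b
  act_zero : ∀ T b, act T 0 b = b
  act_add : ∀ T g g' b, act T (g + g') b = act T g (act T g' b)
  act_natural : ∀ {T T'} (f : T ⟶ T') (g : G.obj T) (b : B.obj T),
    B.map f (act T g b) = act T' (G.map f g) (B.map f b)
  act_free : ∀ T (g : G.obj T) b, act T g b = b → g = 0
  act_trans : ∀ T (b b' : B.obj T), p T b = p T b' → q T b = q T b' → ∃ g, act T g b = b'
  loc_nonempty : ∀ (T : Over S) (x : P.obj (op T)) (y : Q.obj (op T)),
    ∃ R : Presieve T, IsFppfCover R ∧ ∀ ⦃Z : Over S⦄ (f : Z ⟶ T), R f →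
      ∃ b : B.obj (op Z), p (op Z) b = P.map f.op x ∧ q (op Z) b = Q.map f.op y
  /-- first partial composition law: addition of points lying over the same point of `Q` -/
  add₁ : ∀ (T : (Over S)ᵒᵖ) (b b' : B.obj T), q T b = q T b' → B.obj T
  add₁_p : ∀ T b b' h, p T (add₁ T b b' h) = p T b + p T b'
  add₁_q : ∀ T b b' h, q T (add₁ T b b' h) = q T b
  add₁_natural : ∀ {T T'} (f : T ⟶ T') b b' h h',
    B.map f (add₁ T b b' h) = add₁ T' (B.map f b) (B.map f b') h'
  add₁_comm : ∀ T b b' h h', add₁ T b b' h = add₁ T b' b h'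
  add₁_assoc : ∀ T b b' b'' h₁ h₂ h₃ h₄,
    add₁ T (add₁ T b b' h₁) b'' h₂ = add₁ T b (add₁ T b' b'' h₃) h₄
  add₁_act : ∀ T g b b' h h', add₁ T (act T g b) b' h' = act T g (add₁ T b b' h)
  /-- second partial composition law: addition of points lying over the same point of `P` -/
  add₂ : ∀ (T : (Over S)ᵒᵖ) (b b' : B.obj T), p T b = p T b' → B.obj T
  add₂_p : ∀ T b b' h, p T (add₂ T b b' h) = p T b
  add₂_q : ∀ T b b' h, q T (add₂ T b b' h) = q T b + q T b'
  add₂_natural : ∀ {T T'} (f : T ⟶ T') b b' h h',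
    B.map f (add₂ T b b' h) = add₂ T' (B.map f b) (B.map f b') h'
  add₂_comm : ∀ T b b' h h', add₂ T b b' h = add₂ T b' b h'
  add₂_assoc : ∀ T b b' b'' h₁ h₂ h₃ h₄,
    add₂ T (add₂ T b b' h₁) b'' h₂ = add₂ T b (add₂ T b' b'' h₃) h₄
  add₂_act : ∀ T g b b' h h', add₂ T (act T g b) b' h' = act T g (add₂ T b b' h)
  /-- compatibility between the two partial composition laws -/
  interchange : ∀ (T : (Over S)ᵒᵖ) (b₁ b₂ b₃ b₄ : B.obj T)
    (h₁₂ : q T b₁ = q T b₂) (h₃₄ : q T b₃ = q T b₄)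
    (h₁₃ : p T b₁ = p T b₃) (h₂₄ : p T b₂ = p T b₄) (k₁ k₂),
    add₂ T (add₁ T b₁ b₂ h₁₂) (add₁ T b₃ b₄ h₃₄) k₁ =
      add₁ T (add₂ T b₁ b₃ h₁₃) (add₂ T b₂ b₄ h₂₄) k₂

namespace Biextension

variable {S : Scheme.{u}} {P Q G : (Over S)ᵒᵖ ⥤ AddCommGrpCat.{u}}

/-- A trivialization of a biextension: a global bi-additive section. -/
structure Trivialization (b : Biextension S P Q G) where
  s : ∀ T : (Over S)ᵒᵖ, P.obj T → Q.obj T → b.B.obj T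
  natural : ∀ {T T'} (f : T ⟶ T') x y, b.B.map f (s T x y) = s T' (P.map f x) (Q.map f y)
  p_s : ∀ T x y, b.p T (s T x y) = x
  q_s : ∀ T x y, b.q T (s T x y) = y
  add_left : ∀ T x x' y h, s T (x + x') y = b.add₁ T (s T x y) (s T x' y) h
  add_right : ∀ T x y y' h, s T x (y + y') = b.add₂ T (s T x y) (s T x y') h

/-- A biextension is trivial if it admits a bi-additive section. -/
def IsTrivial (b : Biextension S P Q G) : Prop := Nonempty b.Trivialization

/-- A trivialization of the pull-back `(n × m)^* b` of `b` along multiplication by `n` on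
`P` and by `m` on `Q`: a bi-additive natural family of points of `b` lying over
`(n • x, m • y)`. -/
structure MulTrivialization (n m : ℤ) (b : Biextension S P Q G) where
  s : ∀ T : (Over S)ᵒᵖ, P.obj T → Q.obj T → b.B.obj T
  natural : ∀ {T T'} (f : T ⟶ T') x y, b.B.map f (s T x y) = s T' (P.map f x) (Q.map f y)
  p_s : ∀ T x y, b.p T (s T x y) = n • x
  q_s : ∀ T x y, b.q T (s T x y) = m • y
  add_left : ∀ T x x' y h, s T (x + x') y = b.add₁ T (s T x y) (s T x' y) h
  add_right : ∀ T x y y' h, s T x (y + y') = b.add₂ T (s T x y) (s T x y') h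

/-- A morphism from a biextension to itself, over the identity of `P`, `Q` and `G`. -/
structure Endo (b : Biextension S P Q G) where
  φ : ∀ T, b.B.obj T → b.B.obj T
  natural : ∀ {T T'} (f : T ⟶ T') x, b.B.map f (φ T x) = φ T' (b.B.map f x)
  map_p : ∀ T x, b.p T (φ T x) = b.p T x
  map_q : ∀ T x, b.q T (φ T x) = b.q T x
  map_act : ∀ T g x, φ T (b.act T g x) = b.act T g (φ T x)
  map_add₁ : ∀ T x y h h', φ T (b.add₁ T x y h) = b.add₁ T (φ T x) (φ T y) h'
  map_add₂ : ∀ T x y h h', φ T (b.add₂ T x y h) = b.add₂ T (φ T x) (φ T y) h'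

/-- The category of biextensions of `(P,Q)` by `G` is trivial: every biextension is
trivial and admits no nontrivial automorphism. -/
def TrivialCategory (S : Scheme.{u}) (P Q G : (Over S)ᵒᵖ ⥤ AddCommGrpCat.{u}) : Prop :=
  (∀ b : Biextension S P Q G, b.IsTrivial) ∧
  (∀ (b : Biextension S P Q G) (ψ : b.Endo) (T : (Over S)ᵒᵖ) (x : b.B.obj T), ψ.φ T x = x)

end Biextension

/-!
A trivialization `s` of `(n × m)^* b` provides, over a point `(n • x', m • y')` of `P × Q`, the
point `s x' y'` of `b`. It does not depend on the choice of `x'`: if `n • a = 0`, the difference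
`s (x' + a) u - s x' u ∈ G` does not depend on `x'` and is bilinear in `(a, u)`, so it is killed
by `n` and vanishes on `u = n • u'`, and fppf-locally `y'` is of that form because `Q` is
divisible. Symmetrically it does not depend on `y'`. As `P` and `Q` are divisible, every point
of `P × Q` is fppf-locally of the form `(n • x', m • y')`, and the points `s x' y'` glue in the
sheaf `b` to a bi-additive section. It lies over the right points because representable
functors are separated for fppf covers, a jointly surjective family of flat morphisms of
schemes being jointly epimorphic.
-/

lemma flatHom_iff_flat {X Y : Scheme.{u}} (f : X ⟶ Y) : FlatHom f ↔ Flat f :=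
  (Flat.iff_flat_stalkMap f).symm

-- Indexing by the points of `T` keeps the coproduct small.
lemma Scheme.hom_ext_of_forall_exists_flat {T X : Scheme.{u}} {a b : T ⟶ X}
    (H : ∀ t : T, ∃ (Z : Scheme.{u}) (f : Z ⟶ T), Flat f ∧ t ∈ Set.range f ∧ f ≫ a = f ≫ b) :
    a = b := by
  choose Z f hflat hrange heq using H
  have : Surjective (Sigma.desc f) :=
    Surjective.sigmaDesc_of_union_range_eq_univ (Set.eq_univ_of_forall fun t ↦
      Set.mem_iUnion.2 ⟨t, hrange t⟩)
  have := Flat.epi_of_flat_of_surjective (Sigma.desc f)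
  exact (cancel_epi (Sigma.desc f)).1 (Sigma.hom_ext _ _ fun t ↦ by simpa using heq t)

section

variable {S : Scheme.{u}}

lemma IsFppfCover.generate_mem {X : Over S} {R : Presieve X} (hR : IsFppfCover R) :
    Sieve.generate R ∈ fppfTopology S X := by
  rw [fppfTopology, GrothendieckTopology.mem_sInf]
  exact fun J hJ ↦ hJ X R hR

def ContainsFppfCover {U : Over S} (Sv : Sieve U) : Prop :=
  ∃ R : Presieve U, IsFppfCover R ∧ ∀ ⦃Z⦄ (f : Z ⟶ U), R f → Sv f

lemma ContainsFppfCover.mem_fppfTopology {U : Over S} {Sv : Sieve U}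
    (h : ContainsFppfCover Sv) : Sv ∈ fppfTopology S U := by
  obtain ⟨R, hR, hle⟩ := h
  exact (fppfTopology S).superset_covering ((Sieve.generate_le_iff R Sv).2 hle) hR.generate_mem

lemma ContainsFppfCover.bind {U : Over S} (Sv : Sieve U) {R₁ : Presieve U}
    (h₁ : IsFppfCover R₁)
    (H : ∀ ⦃Z⦄ (f : Z ⟶ U), R₁ f → ∃ R₂ : Presieve Z, IsFppfCover R₂ ∧
      ∀ ⦃W⦄ (k : W ⟶ Z), R₂ k → Sv (k ≫ f)) :
    ContainsFppfCover Sv := by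
  choose R₂ hR₂ hSv using H
  refine ⟨fun W g ↦ ∃ (Z : Over S) (f : Z ⟶ U) (hf : R₁ f) (k : W ⟶ Z),
    R₂ f hf k ∧ g = k ≫ f, ⟨?_, ?_⟩, ?_⟩
  · rintro Y g ⟨Z, f, hf, k, hk, rfl⟩
    obtain ⟨hf₁, hf₂⟩ := h₁.1 f hf
    obtain ⟨hk₁, hk₂⟩ := (hR₂ f hf).1 k hk
    rw [flatHom_iff_flat] at hf₁ hk₁ ⊢
    rw [Over.comp_left]
    exact ⟨inferInstance, inferInstance⟩
  · intro x
    obtain ⟨Z, f, hf, z, rfl⟩ := h₁.2 x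
    obtain ⟨W, k, hk, w, rfl⟩ := (hR₂ f hf).2 z
    exact ⟨W, k ≫ f, ⟨Z, f, hf, k, hk, rfl⟩, w, rfl⟩
  · rintro Y g ⟨Z, f, hf, k, hk, rfl⟩
    exact hSv f hf k hk

def IsFppfSeparated (F : (Over S)ᵒᵖ ⥤ AddCommGrpCat.{u}) : Prop :=
  ∀ ⦃T : Over S⦄ (x y : F.obj (op T)) (Sv : Sieve T), ContainsFppfCover Sv →
    (∀ ⦃Z⦄ (f : Z ⟶ T), Sv f → F.map f.op x = F.map f.op y) → x = y

lemma CommGroupScheme.isFppfSeparated (A : CommGroupScheme S) : IsFppfSeparated A.P := by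
  intro T x y Sv ⟨R, hR, hle⟩ h
  let a : T ⟶ A.X := A.repr.hom.app (op T) x
  let b : T ⟶ A.X := A.repr.hom.app (op T) y
  have hab : a = b := by
    refine Over.OverMorphism.ext (Scheme.hom_ext_of_forall_exists_flat fun t ↦ ?_)
    obtain ⟨Z, f, hf, z, hz⟩ := hR.2 t
    refine ⟨Z.left, f.left, (flatHom_iff_flat _).1 (hR.1 f hf).1, ⟨z, hz⟩, ?_⟩
    have hx : A.repr.hom.app (op Z) (A.P.map f.op x) = f ≫ a :=
      NatTrans.naturality_apply A.repr.hom f.op x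
    have hy : A.repr.hom.app (op Z) (A.P.map f.op y) = f ≫ b :=
      NatTrans.naturality_apply A.repr.hom f.op y
    rw [← Over.comp_left, ← Over.comp_left, ← hx, ← hy, h f (hle f hf)]
  simpa [a, b] using congr(A.repr.inv.app (op T) $hab)

namespace Biextension

variable {P Q G : (Over S)ᵒᵖ ⥤ AddCommGrpCat.{u}} (b : Biextension S P Q G)

def swap : Biextension S Q P G where
  B := b.B
  isSheaf := b.isSheaf
  p := b.q
  p_natural := b.q_natural
  q := b.p
  q_natural := b.p_natural
  act := b.act
  act_p := b.act_q
  act_q := b.act_p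
  act_zero := b.act_zero
  act_add := b.act_add
  act_natural := b.act_natural
  act_free := b.act_free
  act_trans T w w' hq hp := b.act_trans T w w' hp hq
  loc_nonempty T y x := by
    obtain ⟨R, hR, h⟩ := b.loc_nonempty T x y
    exact ⟨R, hR, fun Z f hf ↦ (h f hf).imp fun _ ↦ And.symm⟩
  add₁ := b.add₂
  add₁_p := b.add₂_q
  add₁_q := b.add₂_p
  add₁_natural := b.add₂_natural
  add₁_comm := b.add₂_comm
  add₁_assoc := b.add₂_assoc
  add₁_act := b.add₂_act
  add₂ := b.add₁
  add₂_p := b.add₁_q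
  add₂_q := b.add₁_p
  add₂_natural := b.add₁_natural
  add₂_comm := b.add₁_comm
  add₂_assoc := b.add₁_assoc
  add₂_act := b.add₁_act
  interchange T w₁ w₂ w₃ w₄ h₁₂ h₃₄ h₁₃ h₂₄ k₁ k₂ :=
    (b.interchange T w₁ w₃ w₂ w₄ h₁₃ h₂₄ h₁₂ h₃₄ k₂ k₁).symm

lemma isSheaf_of_types : Presieve.IsSheaf (fppfTopology S) b.B :=
  (isSheaf_iff_isSheaf_of_type _ _).mp b.isSheaf

lemma ext_of_mem_fppfTopology {T : Over S} {w w' : b.B.obj (op T)} {Sv : Sieve T}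
    (hSv : Sv ∈ fppfTopology S T)
    (h : ∀ ⦃Z⦄ (f : Z ⟶ T), Sv f → b.B.map f.op w = b.B.map f.op w') : w = w' :=
  (b.isSheaf_of_types Sv hSv).isSeparatedFor.ext h

variable {T : (Over S)ᵒᵖ}

lemma act_left_injective (w : b.B.obj T) : Function.Injective fun g ↦ b.act T g w := by
  intro g g' h
  have h' : b.act T (-g' + g) w = w := by
    simp only at h
    rw [b.act_add, h, ← b.act_add, neg_add_cancel, b.act_zero]
  exact neg_add_eq_zero.1 (b.act_free T _ w h') |>.symm

open Classical in
noncomputable def diff (T : (Over S)ᵒᵖ) (w w' : b.B.obj T) : G.obj T :=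
  if h : ∃ g, b.act T g w' = w then h.choose else 0

variable {b}

lemma act_diff {w w' : b.B.obj T} (hp : b.p T w = b.p T w') (hq : b.q T w = b.q T w') :
    b.act T (b.diff T w w') w' = w := by
  have h := b.act_trans T w' w hp.symm hq.symm
  rw [diff, dif_pos h]
  exact h.choose_spec

lemma diff_eq_of_act_eq {w w' : b.B.obj T} {g : G.obj T} (h : b.act T g w' = w) :
    b.diff T w w' = g :=
  b.act_left_injective w' <| by
    simp only
    rw [act_diff (by rw [← h, b.act_p]) (by rw [← h, b.act_q]), h]

lemma eq_of_diff_eq_zero {w w' : b.B.obj T} (hp : b.p T w = b.p T w') (hq : b.q T w = b.q T w')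
    (h : b.diff T w w' = 0) : w = w' := by
  rw [← act_diff hp hq, h, b.act_zero]

lemma diff_self (w : b.B.obj T) : b.diff T w w = 0 :=
  diff_eq_of_act_eq (b.act_zero T w)

lemma add₁_congr {w₁ w₂ w₁' w₂' : b.B.obj T} (e₁ : w₁ = w₁') (e₂ : w₂ = w₂') (h h') :
    b.add₁ T w₁ w₂ h = b.add₁ T w₁' w₂' h' := by
  subst e₁ e₂; rfl

lemma act_add₁_right (g : G.obj T) (w w' : b.B.obj T) (h h') :
    b.act T g (b.add₁ T w w' h) = b.add₁ T w (b.act T g w') h' := by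
  rw [b.add₁_comm T w w' h h.symm, ← b.add₁_act T g w' w h.symm (by rw [b.act_q]; exact h.symm),
    b.add₁_comm]

lemma diff_add₁ {w₁ w₂ w₁' w₂' : b.B.obj T} (h h')
    (hp₁ : b.p T w₁ = b.p T w₁') (hq₁ : b.q T w₁ = b.q T w₁')
    (hp₂ : b.p T w₂ = b.p T w₂') (hq₂ : b.q T w₂ = b.q T w₂') :
    b.diff T (b.add₁ T w₁ w₂ h) (b.add₁ T w₁' w₂' h') = b.diff T w₁ w₁' + b.diff T w₂ w₂' := by
  refine diff_eq_of_act_eq ?_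
  rw [b.act_add, act_add₁_right _ _ _ _ (by rw [b.act_q, ← hq₂, ← h, hq₁]),
    ← b.add₁_act _ _ _ _ _ (by rw [b.act_q, b.act_q, ← hq₂, ← h, hq₁])]
  exact add₁_congr (act_diff hp₁ hq₁) (act_diff hp₂ hq₂) _ _

lemma diff_add₂ {w₁ w₂ w₁' w₂' : b.B.obj T} (h h')
    (hp₁ : b.p T w₁ = b.p T w₁') (hq₁ : b.q T w₁ = b.q T w₁')
    (hp₂ : b.p T w₂ = b.p T w₂') (hq₂ : b.q T w₂ = b.q T w₂') :
    b.diff T (b.add₂ T w₁ w₂ h) (b.add₂ T w₁' w₂' h') = b.diff T w₁ w₁' + b.diff T w₂ w₂' :=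
  b.swap.diff_add₁ h h' hq₁ hp₁ hq₂ hp₂

end Biextension

namespace Biextension.MulTrivialization

variable {P Q G : (Over S)ᵒᵖ ⥤ AddCommGrpCat.{u}} {b : Biextension S P Q G} {n m : ℤ}
  (t : MulTrivialization n m b)

def swap : MulTrivialization m n b.swap where
  s T y x := t.s T x y
  natural f y x := t.natural f x y
  p_s T y x := t.q_s T x y
  q_s T y x := t.p_s T x y
  add_left T y y' x h := t.add_right T x y y' h
  add_right T y x x' h := t.add_left T x x' y h

variable {T : (Over S)ᵒᵖ}

lemma diff_s_add_left {x₁ x₂ z₁ z₂ : P.obj T} (h₁ : n • x₁ = n • z₁) (h₂ : n • x₂ = n • z₂)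
    (u : Q.obj T) :
    b.diff T (t.s T (x₁ + x₂) u) (t.s T (z₁ + z₂) u) =
      b.diff T (t.s T x₁ u) (t.s T z₁ u) + b.diff T (t.s T x₂ u) (t.s T z₂ u) := by
  rw [t.add_left T x₁ x₂ u (by rw [t.q_s, t.q_s]), t.add_left T z₁ z₂ u (by rw [t.q_s, t.q_s])]
  exact Biextension.diff_add₁ _ _ (by rw [t.p_s, t.p_s, h₁]) (by rw [t.q_s, t.q_s])
    (by rw [t.p_s, t.p_s, h₂]) (by rw [t.q_s, t.q_s])

lemma diff_s_add_right {x z : P.obj T} (h : n • x = n • z) (u u' : Q.obj T) :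
    b.diff T (t.s T x (u + u')) (t.s T z (u + u')) =
      b.diff T (t.s T x u) (t.s T z u) + b.diff T (t.s T x u') (t.s T z u') := by
  rw [t.add_right T x u u' (by rw [t.p_s, t.p_s]), t.add_right T z u u' (by rw [t.p_s, t.p_s])]
  exact Biextension.diff_add₂ _ _ (by rw [t.p_s, t.p_s, h]) (by rw [t.q_s, t.q_s])
    (by rw [t.p_s, t.p_s, h]) (by rw [t.q_s, t.q_s])

noncomputable def torsionPairing (u : Q.obj T) : (zsmulAddGroupHom (α := P.obj T) n).ker →+ G.obj T :=
  AddMonoidHom.mk' (fun a ↦ b.diff T (t.s T a u) (t.s T 0 u)) fun a a' ↦ by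
    simpa using t.diff_s_add_left (z₁ := 0) (z₂ := 0) (by rw [smul_zero]; exact a.2) (by rw [smul_zero]; exact a'.2) u

lemma zsmul_torsionPairing (u : Q.obj T) (a : (zsmulAddGroupHom (α := P.obj T) n).ker) :
    n • t.torsionPairing u a = 0 := by
  rw [← map_zsmul, show n • a = 0 from Subtype.ext a.2, map_zero]

lemma diff_s_zsmul_right {x z : P.obj T} (h : n • x = n • z) (k : ℤ) (u : Q.obj T) :
    b.diff T (t.s T x (k • u)) (t.s T z (k • u)) = k • b.diff T (t.s T x u) (t.s T z u) :=
  map_zsmul (AddMonoidHom.mk' (fun u ↦ b.diff T (t.s T x u) (t.s T z u)) (t.diff_s_add_right h)) k u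

lemma s_zsmul_right_eq {x₁ x₂ : P.obj T} (h : n • x₁ = n • x₂) (u : Q.obj T) :
    t.s T x₁ (n • u) = t.s T x₂ (n • u) := by
  have ha : n • (x₁ - x₂) = 0 := by rw [smul_sub, h, sub_self]
  have hdiff : b.diff T (t.s T x₁ u) (t.s T x₂ u) = b.diff T (t.s T (x₁ - x₂) u) (t.s T 0 u) := by
    simpa [Biextension.diff_self] using
      t.diff_s_add_left (x₁ := x₁ - x₂) (z₁ := 0) (by simpa using ha) (rfl : n • x₂ = n • x₂) u
  refine Biextension.eq_of_diff_eq_zero (by rw [t.p_s, t.p_s, h]) (by rw [t.q_s, t.q_s]) ?_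
  rw [t.diff_s_zsmul_right h, hdiff]
  exact t.zsmul_torsionPairing u ⟨x₁ - x₂, ha⟩

lemma s_zsmul_left_eq {y₁ y₂ : Q.obj T} (h : m • y₁ = m • y₂) (v : P.obj T) :
    t.s T (m • v) y₁ = t.s T (m • v) y₂ :=
  t.swap.s_zsmul_right_eq h v

lemma s_eq_of_zsmul_eq {x₁ x₂ : P.obj T} {y₁ y₂ : Q.obj T} (hx : n • x₁ = n • x₂)
    (hy : m • y₁ = m • y₂) {u : Q.obj T} (hu : n • u = y₁) {v : P.obj T} (hv : m • v = x₂) :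
    t.s T x₁ y₁ = t.s T x₂ y₂ := by
  subst hu hv
  exact (t.s_zsmul_right_eq hx u).trans (t.s_zsmul_left_eq hy v)

end Biextension.MulTrivialization

lemma map_comp_op_apply {F : (Over S)ᵒᵖ ⥤ AddCommGrpCat.{u}} {T Z W : Over S} (f : Z ⟶ T)
    (g : W ⟶ Z) (x : F.obj (op T)) : F.map (g ≫ f).op x = F.map g.op (F.map f.op x) := by
  rw [op_comp, Functor.map_comp_apply]

def divSieve (F : (Over S)ᵒᵖ ⥤ AddCommGrpCat.{u}) (k : ℤ) {T : Over S} (x : F.obj (op T)) :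
    Sieve T where
  arrows _ f := ∃ x', k • x' = F.map f.op x
  downward_closed := by
    rintro Z W f ⟨x', hx'⟩ g
    exact ⟨F.map g.op x', by rw [← map_zsmul, hx', map_comp_op_apply]⟩

variable {P Q : (Over S)ᵒᵖ ⥤ AddCommGrpCat.{u}}

lemma IsDivisible.containsFppfCover_divSieve (hP : IsDivisible P) {k : ℤ} (hk : k ≠ 0)
    {T : Over S} (x : P.obj (op T)) : ContainsFppfCover (divSieve P k x) :=
  hP k hk T x

lemma IsDivisible.containsFppfCover_divSieve_inf (hP : IsDivisible P) (hQ : IsDivisible Q)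
    {k l : ℤ} (hk : k ≠ 0) (hl : l ≠ 0) {T : Over S} (x : P.obj (op T)) (y : Q.obj (op T)) :
    ContainsFppfCover (divSieve P k x ⊓ divSieve Q l y) := by
  obtain ⟨R₁, hR₁, h₁⟩ := hP k hk T x
  refine .bind _ hR₁ fun Z f hf ↦ ?_
  obtain ⟨R₂, hR₂, h₂⟩ := hQ l hl Z (Q.map f.op y)
  refine ⟨R₂, hR₂, fun W g hg ↦ ⟨(divSieve P k x).downward_closed (h₁ f hf) g, ?_⟩⟩
  obtain ⟨y', hy'⟩ := h₂ g hg
  exact ⟨y', hy'.trans (map_comp_op_apply f g y).symm⟩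

namespace Biextension.MulTrivialization

variable {G : (Over S)ᵒᵖ ⥤ AddCommGrpCat.{u}} {b : Biextension S P Q G} {n m : ℤ}
  (t : MulTrivialization n m b)

lemma s_eq_of_zsmul_eq_of_isDivisible (hP : IsDivisible P) (hQ : IsDivisible Q) (hn : n ≠ 0)
    (hm : m ≠ 0) {T : Over S} {x₁ x₂ : P.obj (op T)} {y₁ y₂ : Q.obj (op T)}
    (hx : n • x₁ = n • x₂) (hy : m • y₁ = m • y₂) : t.s (op T) x₁ y₁ = t.s (op T) x₂ y₂ := by
  refine b.ext_of_mem_fppfTopology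
    (hQ.containsFppfCover_divSieve_inf hP hn hm y₁ x₂).mem_fppfTopology ?_
  rintro Z f ⟨⟨u, hu⟩, v, hv⟩
  rw [t.natural, t.natural]
  refine t.s_eq_of_zsmul_eq ?_ ?_ hu hv
  · rw [← map_zsmul, hx, map_zsmul]
  · rw [← map_zsmul, hy, map_zsmul]

noncomputable def localSections (T : Over S) (x : P.obj (op T)) (y : Q.obj (op T)) :
    Presieve.FamilyOfElements b.B (divSieve P n x ⊓ divSieve Q m y).arrows :=
  fun _ _ hf ↦ t.s _ hf.1.choose hf.2.choose

lemma localSections_compatible (hP : IsDivisible P) (hQ : IsDivisible Q) (hn : n ≠ 0)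
    (hm : m ≠ 0) (T : Over S) (x : P.obj (op T)) (y : Q.obj (op T)) :
    (t.localSections T x y).Compatible := by
  intro Y₁ Y₂ Z g₁ g₂ f₁ f₂ h₁ h₂ hcomm
  simp only [localSections, t.natural]
  refine t.s_eq_of_zsmul_eq_of_isDivisible hP hQ hn hm ?_ ?_
  · rw [← map_zsmul, ← map_zsmul, h₁.1.choose_spec, h₂.1.choose_spec, ← map_comp_op_apply,
      ← map_comp_op_apply, hcomm]
  · rw [← map_zsmul, ← map_zsmul, h₁.2.choose_spec, h₂.2.choose_spec, ← map_comp_op_apply,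
      ← map_comp_op_apply, hcomm]

noncomputable def glue (hP : IsDivisible P) (hQ : IsDivisible Q) (hn : n ≠ 0) (hm : m ≠ 0)
    (T : Over S) (x : P.obj (op T)) (y : Q.obj (op T)) : b.B.obj (op T) :=
  (b.isSheaf_of_types _ (hP.containsFppfCover_divSieve_inf hQ hn hm x y).mem_fppfTopology).amalgamate
    (t.localSections T x y) (t.localSections_compatible hP hQ hn hm T x y)

lemma map_glue (hP : IsDivisible P) (hQ : IsDivisible Q) (hn : n ≠ 0) (hm : m ≠ 0)
    {T W : Over S} (g : W ⟶ T) {x : P.obj (op T)} {y : Q.obj (op T)} {x' : P.obj (op W)}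
    {y' : Q.obj (op W)} (hx : n • x' = P.map g.op x) (hy : m • y' = Q.map g.op y) :
    b.B.map g.op (t.glue hP hQ hn hm T x y) = t.s (op W) x' y' := by
  have hg : (divSieve P n x ⊓ divSieve Q m y) g := ⟨⟨x', hx⟩, y', hy⟩
  refine (Presieve.IsSheafFor.valid_glue _ _ _ hg).trans ?_
  exact t.s_eq_of_zsmul_eq_of_isDivisible hP hQ hn hm
    (hg.1.choose_spec.trans hx.symm) (hg.2.choose_spec.trans hy.symm)

lemma glue_natural (hP : IsDivisible P) (hQ : IsDivisible Q) (hn : n ≠ 0) (hm : m ≠ 0)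
    {T T' : Over S} (f : T' ⟶ T) (x : P.obj (op T)) (y : Q.obj (op T)) :
    b.B.map f.op (t.glue hP hQ hn hm T x y) =
      t.glue hP hQ hn hm T' (P.map f.op x) (Q.map f.op y) := by
  refine b.ext_of_mem_fppfTopology
    (hP.containsFppfCover_divSieve_inf hQ hn hm (P.map f.op x) (Q.map f.op y)).mem_fppfTopology ?_
  rintro Z g ⟨⟨x', hx⟩, y', hy⟩
  rw [← Functor.map_comp_apply, ← op_comp,
    t.map_glue hP hQ hn hm (g ≫ f) (hx.trans (map_comp_op_apply f g x).symm)
      (hy.trans (map_comp_op_apply f g y).symm),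
    t.map_glue hP hQ hn hm g hx hy]

lemma glue_swap (hP : IsDivisible P) (hQ : IsDivisible Q) (hn : n ≠ 0) (hm : m ≠ 0)
    (T : Over S) (x : P.obj (op T)) (y : Q.obj (op T)) :
    t.swap.glue hQ hP hm hn T y x = t.glue hP hQ hn hm T x y := by
  refine b.ext_of_mem_fppfTopology
    (hP.containsFppfCover_divSieve_inf hQ hn hm x y).mem_fppfTopology ?_
  rintro Z f ⟨⟨x', hx⟩, y', hy⟩
  exact (t.swap.map_glue hQ hP hm hn f hy hx).trans (t.map_glue hP hQ hn hm f hx hy).symm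

lemma p_glue (hP : IsDivisible P) (hQ : IsDivisible Q) (hn : n ≠ 0) (hm : m ≠ 0)
    (hP' : IsFppfSeparated P) (T : Over S) (x : P.obj (op T)) (y : Q.obj (op T)) :
    b.p (op T) (t.glue hP hQ hn hm T x y) = x := by
  refine hP' _ _ _ (hP.containsFppfCover_divSieve_inf hQ hn hm x y) ?_
  rintro Z f ⟨⟨x', hx⟩, y', hy⟩
  rw [← b.p_natural, t.map_glue hP hQ hn hm f hx hy, t.p_s, hx]

lemma q_glue (hP : IsDivisible P) (hQ : IsDivisible Q) (hn : n ≠ 0) (hm : m ≠ 0)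
    (hQ' : IsFppfSeparated Q) (T : Over S) (x : P.obj (op T)) (y : Q.obj (op T)) :
    b.q (op T) (t.glue hP hQ hn hm T x y) = y := by
  rw [← t.glue_swap]
  exact t.swap.p_glue hQ hP hm hn hQ' T y x

lemma glue_add_left (hP : IsDivisible P) (hQ : IsDivisible Q) (hn : n ≠ 0) (hm : m ≠ 0)
    (T : Over S) (x x' : P.obj (op T)) (y : Q.obj (op T)) (h) :
    t.glue hP hQ hn hm T (x + x') y =
      b.add₁ (op T) (t.glue hP hQ hn hm T x y) (t.glue hP hQ hn hm T x' y) h := by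
  refine b.ext_of_mem_fppfTopology ((fppfTopology S).intersection_covering
    (hP.containsFppfCover_divSieve_inf hQ hn hm x y).mem_fppfTopology
    (hP.containsFppfCover_divSieve hn x').mem_fppfTopology) ?_
  rintro Z f ⟨⟨⟨a, ha⟩, c, hc⟩, a', ha'⟩
  rw [b.add₁_natural f.op _ _ h (by rw [b.q_natural, b.q_natural, h]),
    t.map_glue hP hQ hn hm f (x' := a + a') (by rw [smul_add, ha, ha', map_add]) hc,
    t.add_left _ a a' c (by rw [t.q_s, t.q_s])]
  exact add₁_congr (t.map_glue hP hQ hn hm f ha hc).symm (t.map_glue hP hQ hn hm f ha' hc).symm _ _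

lemma glue_add_right (hP : IsDivisible P) (hQ : IsDivisible Q) (hn : n ≠ 0) (hm : m ≠ 0)
    (T : Over S) (x : P.obj (op T)) (y y' : Q.obj (op T)) (h) :
    t.glue hP hQ hn hm T x (y + y') =
      b.add₂ (op T) (t.glue hP hQ hn hm T x y) (t.glue hP hQ hn hm T x y') h := by
  rw [← t.glue_swap, t.swap.glue_add_left hQ hP hm hn T y y' x
    (by rw [t.glue_swap, t.glue_swap]; exact h)]
  exact add₁_congr (b := b.swap) (t.glue_swap ..) (t.glue_swap ..) _ _

noncomputable def toTrivialization (hP : IsDivisible P) (hQ : IsDivisible Q)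
    (hP' : IsFppfSeparated P) (hQ' : IsFppfSeparated Q) (hn : n ≠ 0) (hm : m ≠ 0) :
    b.Trivialization where
  s T x y := t.glue hP hQ hn hm T.unop x y
  natural f x y := t.glue_natural hP hQ hn hm f.unop x y
  p_s T x y := t.p_glue hP hQ hn hm hP' T.unop x y
  q_s T x y := t.q_glue hP hQ hn hm hQ' T.unop x y
  add_left T x x' y h := t.glue_add_left hP hQ hn hm T.unop x x' y h
  add_right T x y y' h := t.glue_add_right hP hQ hn hm T.unop x y y' h

end Biextension.MulTrivialization

end

/-- Let `P`, `Q`, `G` be commutative `S`-group schemes with `P` and `Q`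
divisible. For all nonzero integers `n`, `m`, the endomorphism of `Biext¹(P, Q; G)`
sending a biextension `B` to its pull-back `(n × m)^* B` along multiplication by `n` on
`P` and by `m` on `Q` has trivial kernel: if `(n × m)^* B` is trivial then so is `B`. -/
theorem biextension_pullback_mul_kernel_trivial
    (S : Scheme.{u}) (P Q G : CommGroupScheme S)
    (hP : IsDivisible P.P) (hQ : IsDivisible Q.P)
    (n m : ℤ) (hn : n ≠ 0) (hm : m ≠ 0)
    (b : Biextension S P.P Q.P G.P)
    (h : Nonempty (Biextension.MulTrivialization n m b)) :
    b.IsTrivial := by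
  obtain ⟨t⟩ := h
  exact ⟨t.toTrivialization hP hQ P.isFppfSeparated Q.isFppfSeparated hn hm⟩

end FormalPaper
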